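/- One has the equality of ideals of ℤ[G]: (#I − ν_I·φ̃^{-1} + #I·ν_I) · (g̃, ν_I) = g̃ · (#I·ν_I, #I − ν_I·φ̃^{-1}). (This is the content of Proposition 4.1 of the paper, h·SFitt⟨−1⟩_{ℤ[G]}(A) = (ν_I, 1 − (ν_I/#I)φ^{-1}) for A = ℤ[G/I]/(g) and h = 1 − (ν_I/#I)φ̃^{-1} + ν_I ∈ ℚ[G], with denominators cleared using SFitt⟨−1⟩_{ℤ[G]}(A) = g̃^{-1}·(g̃, ν_I).) -/
import Mathlib


open MonoidAlgebra

/-- The sum `ν_H = Σ_{σ ∈ H} σ` of the elements of a subgroup `H` in the group algebra. -/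
noncomputable def nuElt (R : Type) [CommRing R] {G : Type} [CommGroup G] [Fintype G]
    (H : Subgroup G) : MonoidAlgebra R G :=
  letI := Classical.decPred (· ∈ H)
  ∑ σ ∈ Finset.univ.filter (· ∈ H), MonoidAlgebra.of R G σ

/-- `ν_I² = #I · ν_I`. -/
lemma nu_sq {G : Type} [CommGroup G] [Fintype G] (I : Subgroup G) :
    nuElt ℤ I * nuElt ℤ I = (Nat.card I : MonoidAlgebra ℤ G) * nuElt ℤ I := by
  classical
  unfold nuElt
  rw [Finset.sum_mul_sum]
  have h1 : ∀ σ ∈ Finset.univ.filter (· ∈ I),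
      (∑ τ ∈ Finset.univ.filter (· ∈ I),
        MonoidAlgebra.of ℤ G σ * MonoidAlgebra.of ℤ G τ)
      = ∑ τ ∈ Finset.univ.filter (· ∈ I), MonoidAlgebra.of ℤ G τ := by
    intro σ hσ
    simp only [Finset.mem_filter] at hσ
    refine Finset.sum_nbij' (fun τ => σ * τ) (fun x => σ⁻¹ * x) ?_ ?_ ?_ ?_ ?_
    · intro τ hτ; simp only [Finset.mem_filter, Finset.mem_univ, true_and] at *
      exact I.mul_mem hσ hτ
    · intro x hx; simp only [Finset.mem_filter, Finset.mem_univ, true_and] at *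
      exact I.mul_mem (I.inv_mem hσ) hx
    · intro τ _; group
    · intro x _; group
    · intro τ _; rw [← map_mul]
  rw [Finset.sum_congr rfl h1, Finset.sum_const, nsmul_eq_mul]
  congr 2
  rw [Nat.card_eq_fintype_card, Fintype.card_subtype]

lemma span_singleton_mul_span_pair {R : Type*} [CommRing R] (a b c : R) :
    Ideal.span {a} * Ideal.span {b, c} = Ideal.span {a * b} ⊔ Ideal.span {a * c} := by
  rw [Ideal.span_insert, Ideal.mul_sup, Ideal.span_singleton_mul_span_singleton,
    Ideal.span_singleton_mul_span_singleton]

lemma sup_span_add {R : Type*} [CommRing R] (x y : R) :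
    Ideal.span {x + y} ⊔ Ideal.span {y} = Ideal.span {x} ⊔ Ideal.span {y} := by
  apply le_antisymm
  · apply sup_le
    · rw [Ideal.span_singleton_le_iff_mem]
      exact add_mem (Ideal.mem_sup_left (Ideal.subset_span rfl))
        (Ideal.mem_sup_right (Ideal.subset_span rfl))
    · exact le_sup_right
  · apply sup_le
    · rw [Ideal.span_singleton_le_iff_mem]
      have hm : (x + y) - y ∈ Ideal.span {x + y} ⊔ Ideal.span {y} :=
        sub_mem (Ideal.mem_sup_left (Ideal.subset_span rfl))
          (Ideal.mem_sup_right (Ideal.subset_span rfl))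
      simpa using hm
    · exact le_sup_right

lemma abstract_main {R : Type*} [CommRing R] (n ν x : R) (hns : ν * ν = n * ν) :
    Ideal.span {n - ν * x + n * ν} * Ideal.span {1 - x + n, ν}
    = Ideal.span {1 - x + n} * Ideal.span {n * ν, n - ν * x} := by
  rw [span_singleton_mul_span_pair, span_singleton_mul_span_pair]
  have k1 : (n - ν * x + n * ν) * ν = (1 - x + n) * (n * ν) := by
    linear_combination (n - x) * hns
  have k2 : (n - ν * x + n * ν) * (1 - x + n)
      = (1 - x + n) * (n - ν * x) + (1 - x + n) * (n * ν) := by ring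
  rw [k1, k2, sup_span_add, sup_comm]

/-- `(#I − ν_I·φ̃⁻¹ + #I·ν_I) · (g̃, ν_I) = g̃ · (#I·ν_I, #I − ν_I·φ̃⁻¹)`
as ideals of `ℤ[G]`, where `g̃ = 1 − φ̃⁻¹ + #I`.  (This is
`h·SFitt⁽⁻¹⁾(A) = (ν_I, 1 − (ν_I/#I)φ⁻¹)` with denominators cleared.) -/
theorem statement9 {G : Type} [CommGroup G] [Fintype G] (I D : Subgroup G) (hID : I ≤ D)
    (φt : G) (hφt : φt ∈ D) (hφgen : ∀ d ∈ D, ∃ n : ℤ, φt ^ n * d⁻¹ ∈ I) :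
    Ideal.span {(Nat.card I : MonoidAlgebra ℤ G)
        - nuElt ℤ I * MonoidAlgebra.of ℤ G φt⁻¹
        + (Nat.card I : MonoidAlgebra ℤ G) * nuElt ℤ I} *
      Ideal.span {1 - MonoidAlgebra.of ℤ G φt⁻¹ + (Nat.card I : MonoidAlgebra ℤ G),
        nuElt ℤ I}
    = Ideal.span {1 - MonoidAlgebra.of ℤ G φt⁻¹ + (Nat.card I : MonoidAlgebra ℤ G)} *
      Ideal.span {(Nat.card I : MonoidAlgebra ℤ G) * nuElt ℤ I,
        (Nat.card I : MonoidAlgebra ℤ G) - nuElt ℤ I * MonoidAlgebra.of ℤ G φt⁻¹} :=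
  abstract_main _ _ _ (nu_sq I)
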